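/- arXiv:1703.02226 — 7 statements merged into one kernel-verified Lean document; each statement's English description precedes it below -/
import Mathlib

section
/- Let q : ℝ → ℂ be any function, let k ∈ ℂ, and let v₁, v₂ : ℝ → ℂ be differentiable functions satisfying the AKNS scattering system with reverse space-time Sinh-Gordon symmetry reduction, i.e. for all x ∈ ℝ: v₁'(x) = -i k v₁(x) + q(x) v₂(x) and v₂'(x) = q(-x) v₁(x) + i k v₂(x). Then the functions w₁(x) := v₂(-x) and w₂(x) := -v₁(-x) solve the same system: for all x ∈ ℝ, w₁'(x) = -i k w₁(x) + q(x) w₂(x) and w₂'(x) = q(-x) w₁(x) + i k w₂(x). -/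
/-!
For arbitrary potentials `(q, r)`, the reflection `(v₁, v₂) ↦ (v₂(-·), -v₁(-·))` carries solutions of
the AKNS system to solutions of the system with potentials `(r(-·), q(-·))`. The reduction
`r = q(-·)` is a fixed point of this swap of potentials, so the reflection preserves its solutions.
-/
def IsAKNSSolution (q r : ℝ → ℂ) (k : ℂ) (v₁ v₂ : ℝ → ℂ) : Prop :=
  (∀ x : ℝ, deriv v₁ x = -Complex.I * k * v₁ x + q x * v₂ x) ∧
  (∀ x : ℝ, deriv v₂ x = r x * v₁ x + Complex.I * k * v₂ x)

theorem IsAKNSSolution.reflect {q r : ℝ → ℂ} {k : ℂ} {v₁ v₂ : ℝ → ℂ}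
    (h : IsAKNSSolution q r k v₁ v₂) :
    IsAKNSSolution (fun x ↦ r (-x)) (fun x ↦ q (-x)) k (fun x ↦ v₂ (-x)) (fun x ↦ -v₁ (-x)) := by
  refine ⟨fun x ↦ ?_, fun x ↦ ?_⟩
  · rw [deriv_comp_neg, h.2]
    ring
  · rw [deriv.fun_neg, deriv_comp_neg, h.1]
    ring

theorem akns_sinhGordon_symmetry_general (q : ℝ → ℂ) (k : ℂ) (v₁ v₂ : ℝ → ℂ)
    (h₁ : ∀ x : ℝ, deriv v₁ x = -Complex.I * k * v₁ x + q x * v₂ x)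
    (h₂ : ∀ x : ℝ, deriv v₂ x = q (-x) * v₁ x + Complex.I * k * v₂ x)
    (w₁ w₂ : ℝ → ℂ)
    (hw₁ : ∀ x : ℝ, w₁ x = v₂ (-x))
    (hw₂ : ∀ x : ℝ, w₂ x = -v₁ (-x)) :
    (∀ x : ℝ, deriv w₁ x = -Complex.I * k * w₁ x + q x * w₂ x) ∧
    (∀ x : ℝ, deriv w₂ x = q (-x) * w₁ x + Complex.I * k * w₂ x) := by
  obtain rfl : w₁ = fun x ↦ v₂ (-x) := funext hw₁
  obtain rfl : w₂ = fun x ↦ -v₁ (-x) := funext hw₂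
  have hv : IsAKNSSolution q (fun x ↦ q (-x)) k v₁ v₂ := ⟨h₁, h₂⟩
  simpa only [IsAKNSSolution, neg_neg] using hv.reflect

/-- If `(v₁, v₂)` solves the AKNS scattering problem with the reverse space-time
Sinh-Gordon symmetry reduction `r(x) = q(-x)`, then `(w₁, w₂) = (v₂(-·), -v₁(-·))`
solves the same system. -/
theorem akns_sinhGordon_symmetry (q : ℝ → ℂ) (k : ℂ) (v₁ v₂ : ℝ → ℂ)
    (hv₁ : Differentiable ℝ v₁) (hv₂ : Differentiable ℝ v₂)
    (h₁ : ∀ x : ℝ, deriv v₁ x = -Complex.I * k * v₁ x + q x * v₂ x)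
    (h₂ : ∀ x : ℝ, deriv v₂ x = q (-x) * v₁ x + Complex.I * k * v₂ x)
    (w₁ w₂ : ℝ → ℂ)
    (hw₁ : ∀ x : ℝ, w₁ x = v₂ (-x))
    (hw₂ : ∀ x : ℝ, w₂ x = -v₁ (-x)) :
    (∀ x : ℝ, deriv w₁ x = -Complex.I * k * w₁ x + q x * w₂ x) ∧
    (∀ x : ℝ, deriv w₂ x = q (-x) * w₁ x + Complex.I * k * w₂ x) :=
  akns_sinhGordon_symmetry_general q k v₁ v₂ h₁ h₂ w₁ w₂ hw₁ hw₂
end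

section
/- Let σ ∈ ℂ and let q₊, q₋ : ℝ → ℂ be differentiable functions satisfying, for all t ∈ ℝ, i q₊'(t) = -2 σ q₊(t)² q₋(-t) and i q₋'(t) = -2 σ q₋(t)² q₊(-t). Then: (a) the product q₊(t) q₋(-t) is constant in t, equal to C₀ := q₊(0) q₋(0); and (b) for all t ∈ ℝ, q₊(t) = q₊(0) e^{2 i σ C₀ t} and q₋(t) = q₋(0) e^{2 i σ C₀ t}. -/
/-! By the two equations (the second one taken at `-t`), both terms of the derivative of
`q₊(t) q₋(-t)` equal `± 2iσ (q₊(t) q₋(-t))²`, so the product is a constant `C₀`. Substituting it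
back turns each equation into the linear equation `q' = 2iσC₀ q`, whose solutions are exponentials. -/

open Complex

theorem mul_comp_neg_eq_of_hasDerivAt {𝔸 : Type*} [NormedCommRing 𝔸] [NormedAlgebra ℝ 𝔸]
    {f g : ℝ → 𝔸} {a : 𝔸}
    (hf : ∀ t, HasDerivAt f (a * f t ^ 2 * g (-t)) t)
    (hg : ∀ t, HasDerivAt g (a * g t ^ 2 * f (-t)) t) (t : ℝ) :
    f t * g (-t) = f 0 * g 0 := by
  have hprod : ∀ s, HasDerivAt (fun s => f s * g (-s)) 0 s := fun s => by
    have hgneg : HasDerivAt (fun s => g (-s)) (-(a * g (-s) ^ 2 * f s)) s :=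
      ((hg (-s)).scomp s (hasDerivAt_neg s)).congr_deriv (by simp)
    exact ((hf s).mul hgneg).congr_deriv (by ring)
  simpa using is_const_of_deriv_eq_zero (fun s => (hprod s).differentiableAt)
    (fun s => (hprod s).deriv) t 0

theorem eq_mul_exp_of_hasDerivAt {f : ℝ → ℂ} {c : ℂ} (hf : ∀ t, HasDerivAt f (c * f t) t)
    (t : ℝ) : f t = f 0 * exp (c * t) := by
  have hdamped : ∀ s : ℝ, HasDerivAt (fun s : ℝ => f s * exp (-(c * s))) 0 s := fun s => by
    have hexp : HasDerivAt (fun s : ℝ => exp (-(c * s))) (exp (-(c * s)) * -c) s := by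
      simpa using ((ofRealCLM.hasDerivAt (x := s)).const_mul c).neg.cexp
    exact ((hf s).mul hexp).congr_deriv (by ring)
  have hconst := is_const_of_deriv_eq_zero (fun s => (hdamped s).differentiableAt)
    (fun s => (hdamped s).deriv) t 0
  simp only [ofReal_zero, mul_zero, neg_zero, exp_zero, mul_one] at hconst
  rw [← hconst, mul_assoc, ← exp_add, neg_add_cancel, exp_zero, mul_one]

/-- Analysis of the boundary ODE system of the nonlocal reverse space-time NLS equation:
the product `q₊(t) q₋(-t)` is constant, equal to `C₀ = q₊(0) q₋(0)`, and the boundary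
values evolve as pure exponentials `q₊(0) e^{2iσC₀t}`, `q₋(0) e^{2iσC₀t}`. -/
theorem rst_nls_boundary_ode (σ : ℂ) (qp qm : ℝ → ℂ)
    (hqp : Differentiable ℝ qp) (hqm : Differentiable ℝ qm)
    (hp : ∀ t : ℝ, Complex.I * deriv qp t = -2 * σ * (qp t) ^ 2 * qm (-t))
    (hm : ∀ t : ℝ, Complex.I * deriv qm t = -2 * σ * (qm t) ^ 2 * qp (-t)) :
    (∀ t : ℝ, qp t * qm (-t) = qp 0 * qm 0) ∧
    (∀ t : ℝ, qp t = qp 0 * Complex.exp (2 * Complex.I * σ * (qp 0 * qm 0) * t)) ∧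
    (∀ t : ℝ, qm t = qm 0 * Complex.exp (2 * Complex.I * σ * (qp 0 * qm 0) * t)) := by
  have solve_deriv : ∀ {d u v : ℂ}, I * d = -2 * σ * u ^ 2 * v → d = 2 * I * σ * u ^ 2 * v :=
    fun {d} _ _ h => by linear_combination (-I) * h + d * I_sq
  have hdp : ∀ t, HasDerivAt qp (2 * I * σ * qp t ^ 2 * qm (-t)) t := fun t =>
    solve_deriv (hp t) ▸ (hqp t).hasDerivAt
  have hdm : ∀ t, HasDerivAt qm (2 * I * σ * qm t ^ 2 * qp (-t)) t := fun t =>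
    solve_deriv (hm t) ▸ (hqm t).hasDerivAt
  have hconst := mul_comp_neg_eq_of_hasDerivAt hdp hdm
  refine ⟨hconst, eq_mul_exp_of_hasDerivAt fun t => ?_, eq_mul_exp_of_hasDerivAt fun t => ?_⟩
  · exact (hdp t).congr_deriv (by linear_combination 2 * I * σ * qp t * hconst t)
  · have hconst_neg := hconst (-t)
    rw [neg_neg] at hconst_neg
    exact (hdm t).congr_deriv (by linear_combination 2 * I * σ * qm t * hconst_neg)
end

section
/- Let q₀ > 0, α ∈ ℝ, and θ₊ ∈ (0, π) with θ₊ ≠ π/2. Define ξ(x,t) := q₀ x sin θ₊ + (α t / 2) tan θ₊, and define q, s : ℝ × ℝ → ℂ by q(x,t) := q₀ e^{i α t} cos(θ₊ - i ξ(x,t)) sech(ξ(x,t)) and s(x,t) := (1/2) q₀ α sin θ₊ tan θ₊ · sech²(ξ(x,t)). Then for all (x,t) ∈ ℝ²: (i) ∂_x ∂_t q(x,t) + 2 s(x,t) q(x,t) = 0; (ii) ∂_x s(x,t) = -∂_t ( q(x,t) q(-x,-t) ); and (iii) s(-x,-t) = s(x,t). That is, q is an exact (dark) one-soliton solution of the nonlocal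 reverse space-time Sinh-Gordon equation. -/
/-!
Since `cos (θ - iξ) sech ξ = cos θ + i sin θ tanh ξ`, the solution is a phase-modulated
travelling wave `q = q₀ e^{iαt} u(ax + bt)` with `u = cos θ + i sin θ tanh`, `a = q₀ sin θ`,
`b = (α/2) tan θ`, and `s = a b sech²`. Equation (i) then reduces to the ordinary differential
equation `iα u' + b u'' + 2b sech² u = 0`, which holds exactly because `2b cos θ = α sin θ`.
As `tanh` is odd, `q(x,t) q(-x,-t) = q₀² (1 - sin² θ sech² ξ)`, and (ii) becomes
`a² = q₀² sin² θ`.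
-/

open Complex (I)

namespace Real

theorem inv_cosh_sq_eq_one_sub_tanh_sq (x : ℝ) : (cosh x)⁻¹ ^ 2 = 1 - tanh x ^ 2 := by
  have := (cosh_pos x).ne'
  rw [tanh_eq_sinh_div_cosh]
  field_simp
  linear_combination -cosh_sq x

theorem hasDerivAt_tanh (x : ℝ) : HasDerivAt tanh ((cosh x)⁻¹ ^ 2) x := by
  have := (cosh_pos x).ne'
  rw [show tanh = fun y => sinh y / cosh y from funext tanh_eq_sinh_div_cosh]
  refine ((hasDerivAt_sinh x).div (hasDerivAt_cosh x) this).congr_deriv ?_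
  field_simp
  linear_combination cosh_sq x

theorem hasDerivAt_inv_cosh_sq (x : ℝ) :
    HasDerivAt (fun y => (cosh y)⁻¹ ^ 2) (-2 * tanh x * (cosh x)⁻¹ ^ 2) x := by
  have := (cosh_pos x).ne'
  refine (((hasDerivAt_cosh x).inv this).pow 2).congr_deriv ?_
  simp only [Pi.inv_apply, tanh_eq_sinh_div_cosh, Nat.cast_ofNat, Nat.reduceSub]
  field_simp

end Real

section PhaseWave

variable (C α a b : ℝ) {u u' u'' : ℝ → ℂ}

theorem hasDerivAt_phaseWave_time (x t : ℝ)
    (hu : HasDerivAt u (u' (a * x + b * t)) (a * x + b * t)) :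
    HasDerivAt (fun τ : ℝ => (C : ℂ) * Complex.exp (I * α * τ) * u (a * x + b * τ))
      (C * Complex.exp (I * α * t) * (I * α * u (a * x + b * t) + b * u' (a * x + b * t))) t := by
  have hphase : HasDerivAt (fun τ : ℝ => (C : ℂ) * Complex.exp (I * α * τ))
      (C * (Complex.exp (I * α * t) * (I * α))) t :=
    ((((hasDerivAt_id (t : ℂ)).const_mul (I * α)).cexp).comp_ofReal).const_mul _ |>.congr_deriv
      (by simp)
  have hwave : HasDerivAt (fun τ : ℝ => u (a * x + b * τ)) (b * u' (a * x + b * t)) t := by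
    simpa [Function.comp_def] using
      hu.scomp t (((hasDerivAt_id t).const_mul b).const_add (a * x))
  refine (hphase.mul hwave).congr_deriv ?_
  ring

theorem hasDerivAt_phaseWave_space (x t : ℝ)
    (hu : HasDerivAt u (u' (a * x + b * t)) (a * x + b * t)) :
    HasDerivAt (fun y : ℝ => (C : ℂ) * Complex.exp (I * α * t) * u (a * y + b * t))
      (C * Complex.exp (I * α * t) * (a * u' (a * x + b * t))) x := by
  have hwave : HasDerivAt (fun y : ℝ => u (a * y + b * t)) (a * u' (a * x + b * t)) x := by
    simpa [Function.comp_def] using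
      hu.scomp x (((hasDerivAt_id x).const_mul a).add_const (b * t))
  exact hwave.const_mul _

theorem deriv_deriv_phaseWave (hu : ∀ ξ, HasDerivAt u (u' ξ) ξ)
    (hu' : ∀ ξ, HasDerivAt u' (u'' ξ) ξ) (x t : ℝ) :
    deriv (fun y : ℝ =>
        deriv (fun τ : ℝ => (C : ℂ) * Complex.exp (I * α * τ) * u (a * y + b * τ)) t) x =
      C * Complex.exp (I * α * t) *
        (a * (I * α * u' (a * x + b * t) + b * u'' (a * x + b * t))) := by
  have hv : ∀ ξ, HasDerivAt (fun ξ => I * α * u ξ + b * u' ξ) (I * α * u' ξ + b * u'' ξ) ξ :=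
    fun ξ => ((hu ξ).const_mul _).add ((hu' ξ).const_mul _)
  have htime : (fun y : ℝ =>
      deriv (fun τ : ℝ => (C : ℂ) * Complex.exp (I * α * τ) * u (a * y + b * τ)) t) =
      fun y => C * Complex.exp (I * α * t) * (I * α * u (a * y + b * t) + b * u' (a * y + b * t)) :=
    funext fun y => (hasDerivAt_phaseWave_time C α a b y t (hu _)).deriv
  rw [htime]
  exact (hasDerivAt_phaseWave_space C α a b x t (u := fun ξ => I * α * u ξ + b * u' ξ)
    (u' := fun ξ => I * α * u' ξ + b * u'' ξ) (hv _)).deriv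

end PhaseWave

noncomputable def darkProfile (θ ξ : ℝ) : ℂ := Real.cos θ + I * (Real.sin θ * Real.tanh ξ : ℝ)

theorem cos_sub_I_mul_div_cosh_eq_darkProfile (θ ξ : ℝ) :
    Complex.cos (θ - I * ξ) * (1 / Complex.cosh ξ) = darkProfile θ ξ := by
  have hcosh : Complex.cosh ξ ≠ 0 := by
    rw [← Complex.ofReal_cosh]
    exact_mod_cast (Real.cosh_pos ξ).ne'
  rw [darkProfile, Complex.cos_sub, mul_comm I, Complex.cos_mul_I, Complex.sin_mul_I]
  push_cast [Complex.ofReal_tanh, Complex.tanh_eq_sinh_div_cosh]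
  field_simp

section DarkProfile

variable (θ : ℝ)

theorem hasDerivAt_darkProfile (ξ : ℝ) :
    HasDerivAt (darkProfile θ) (I * (Real.sin θ * (Real.cosh ξ)⁻¹ ^ 2 : ℝ)) ξ :=
  (((Real.hasDerivAt_tanh ξ).const_mul (Real.sin θ)).ofReal_comp.const_mul I).const_add _

theorem hasDerivAt_deriv_darkProfile (ξ : ℝ) :
    HasDerivAt (fun ξ => I * (Real.sin θ * (Real.cosh ξ)⁻¹ ^ 2 : ℝ))
      (I * (Real.sin θ * (-2 * Real.tanh ξ * (Real.cosh ξ)⁻¹ ^ 2) : ℝ)) ξ :=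
  ((Real.hasDerivAt_inv_cosh_sq ξ).const_mul (Real.sin θ)).ofReal_comp.const_mul I

theorem darkProfile_mul_darkProfile_neg (ξ : ℝ) :
    darkProfile θ ξ * darkProfile θ (-ξ) = (1 - Real.sin θ ^ 2 * (Real.cosh ξ)⁻¹ ^ 2 : ℝ) := by
  rw [darkProfile, darkProfile, Real.tanh_neg, Real.inv_cosh_sq_eq_one_sub_tanh_sq]
  have hpyth : (Real.sin θ : ℂ) ^ 2 + (Real.cos θ : ℂ) ^ 2 = 1 := by
    exact_mod_cast Real.sin_sq_add_cos_sq θ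
  simp only [Complex.ofReal_sub, Complex.ofReal_mul, Complex.ofReal_neg, Complex.ofReal_pow,
    Complex.ofReal_one]
  linear_combination hpyth - (Real.sin θ * Real.tanh ξ : ℂ) ^ 2 * Complex.I_sq

theorem darkProfile_ode {α b : ℝ} (h : 2 * b * Real.cos θ = α * Real.sin θ) (ξ : ℝ) :
    I * α * (I * (Real.sin θ * (Real.cosh ξ)⁻¹ ^ 2 : ℝ))
      + b * (I * (Real.sin θ * (-2 * Real.tanh ξ * (Real.cosh ξ)⁻¹ ^ 2) : ℝ))
      + 2 * b * ((Real.cosh ξ)⁻¹ ^ 2 : ℝ) * darkProfile θ ξ = 0 := by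
  have hC : (2 * b * Real.cos θ : ℂ) = α * Real.sin θ := by exact_mod_cast h
  rw [darkProfile]
  simp only [Complex.ofReal_mul, Complex.ofReal_neg, Complex.ofReal_pow, Complex.ofReal_inv,
    Complex.ofReal_ofNat]
  linear_combination (Real.cosh ξ : ℂ)⁻¹ ^ 2 * hC
    + α * Real.sin θ * (Real.cosh ξ : ℂ)⁻¹ ^ 2 * Complex.I_sq

end DarkProfile

section DarkSoliton

variable (q₀ α θ b : ℝ)

noncomputable def darkSoliton (x t : ℝ) : ℂ :=
  q₀ * Complex.exp (I * α * t) * darkProfile θ (q₀ * Real.sin θ * x + b * t)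

noncomputable def darkPotential (x t : ℝ) : ℝ :=
  q₀ * Real.sin θ * b * (Real.cosh (q₀ * Real.sin θ * x + b * t))⁻¹ ^ 2

theorem darkSoliton_sinhGordon (h : 2 * b * Real.cos θ = α * Real.sin θ) (x t : ℝ) :
    deriv (fun y => deriv (fun τ => darkSoliton q₀ α θ b y τ) t) x
      + 2 * (darkPotential q₀ θ b x t : ℂ) * darkSoliton q₀ α θ b x t = 0 := by
  have hode := darkProfile_ode θ h (q₀ * Real.sin θ * x + b * t)
  unfold darkSoliton darkPotential
  rw [deriv_deriv_phaseWave q₀ α (q₀ * Real.sin θ) b (hasDerivAt_darkProfile θ)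
    (hasDerivAt_deriv_darkProfile θ)]
  push_cast at hode ⊢
  linear_combination (q₀ * Complex.exp (I * α * t) * (q₀ * Complex.sin θ)) * hode

theorem darkSoliton_mul_darkSoliton_neg (x t : ℝ) :
    darkSoliton q₀ α θ b x t * darkSoliton q₀ α θ b (-x) (-t) =
      (q₀ ^ 2 * (1 - Real.sin θ ^ 2 * (Real.cosh (q₀ * Real.sin θ * x + b * t))⁻¹ ^ 2) : ℝ) := by
  have hphase : Complex.exp (I * α * t) * Complex.exp (I * α * (-t : ℝ)) = 1 := by
    rw [← Complex.exp_add]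
    push_cast
    ring_nf
    exact Complex.exp_zero
  unfold darkSoliton
  rw [show q₀ * Real.sin θ * -x + b * -t = -(q₀ * Real.sin θ * x + b * t) by ring]
  calc _ = q₀ ^ 2 * (Complex.exp (I * α * t) * Complex.exp (I * α * (-t : ℝ)))
        * (darkProfile θ (q₀ * Real.sin θ * x + b * t)
          * darkProfile θ (-(q₀ * Real.sin θ * x + b * t))) := by ring
    _ = _ := by
      rw [hphase, darkProfile_mul_darkProfile_neg]
      push_cast
      ring

theorem deriv_darkPotential (x t : ℝ) :
    deriv (fun y => (darkPotential q₀ θ b y t : ℂ)) x =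
      -deriv (fun τ => darkSoliton q₀ α θ b x τ * darkSoliton q₀ α θ b (-x) (-τ)) t := by
  set a := q₀ * Real.sin θ
  have hspace : HasDerivAt (fun y => darkPotential q₀ θ b y t)
      (a * b * (a * (-2 * Real.tanh (a * x + b * t) * (Real.cosh (a * x + b * t))⁻¹ ^ 2))) x := by
    have := (Real.hasDerivAt_inv_cosh_sq _).scomp x
      (((hasDerivAt_id x).const_mul a).add_const (b * t))
    exact (this.const_mul (a * b)).congr_deriv (by simp)
  have htime : HasDerivAt
      (fun τ => q₀ ^ 2 * (1 - Real.sin θ ^ 2 * (Real.cosh (a * x + b * τ))⁻¹ ^ 2))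
      (q₀ ^ 2 * -(Real.sin θ ^ 2 *
        (b * (-2 * Real.tanh (a * x + b * t) * (Real.cosh (a * x + b * t))⁻¹ ^ 2)))) t := by
    have := (Real.hasDerivAt_inv_cosh_sq _).scomp t
      (((hasDerivAt_id t).const_mul b).const_add (a * x))
    exact (((this.const_mul (Real.sin θ ^ 2)).const_sub 1).const_mul (q₀ ^ 2)).congr_deriv
      (by simp)
  simp_rw [darkSoliton_mul_darkSoliton_neg]
  rw [hspace.ofReal_comp.deriv, htime.ofReal_comp.deriv, ← Complex.ofReal_neg]
  congr 1
  ring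

theorem darkPotential_neg (x t : ℝ) :
    darkPotential q₀ θ b (-x) (-t) = darkPotential q₀ θ b x t := by
  unfold darkPotential
  rw [show q₀ * Real.sin θ * -x + b * -t = -(q₀ * Real.sin θ * x + b * t) by ring, Real.cosh_neg]

end DarkSoliton

theorem rst_sinhGordon_dark_one_soliton_general (q₀ α θp : ℝ)
    (hθ : θp ∈ Set.Ioo 0 Real.pi) (hθ' : θp ≠ Real.pi / 2)
    (ξ : ℝ → ℝ → ℝ)
    (hξ : ∀ x t : ℝ, ξ x t = q₀ * x * Real.sin θp + α * t / 2 * Real.tan θp)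
    (q s : ℝ → ℝ → ℂ)
    (hq : ∀ x t : ℝ, q x t =
      (q₀ : ℂ) * Complex.exp (Complex.I * (α : ℂ) * (t : ℂ)) *
        Complex.cos ((θp : ℂ) - Complex.I * (ξ x t : ℂ)) *
        (1 / Complex.cosh ((ξ x t : ℂ))))
    (hs : ∀ x t : ℝ, s x t =
      ((1 / 2 * q₀ * α * Real.sin θp * Real.tan θp * (1 / Real.cosh (ξ x t)) ^ 2 : ℝ) : ℂ)) :
    (∀ x t : ℝ,
      deriv (fun y : ℝ => deriv (fun τ : ℝ => q y τ) t) x + 2 * s x t * q x t = 0) ∧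
    (∀ x t : ℝ,
      deriv (fun y : ℝ => s y t) x = -deriv (fun τ : ℝ => q x τ * q (-x) (-τ)) t) ∧
    (∀ x t : ℝ, s (-x) (-t) = s x t) := by
  set b := α / 2 * Real.tan θp
  have hcos : Real.cos θp ≠ 0 := fun h => hθ' <| Real.injOn_cos (Set.Ioo_subset_Icc_self hθ)
    ⟨by positivity, by linarith [Real.pi_pos]⟩ (h.trans Real.cos_pi_div_two.symm)
  have hb : 2 * b * Real.cos θp = α * Real.sin θp := by
    simp only [b, Real.tan_eq_sin_div_cos]
    field_simp
  have hξ' : ∀ x t, ξ x t = q₀ * Real.sin θp * x + b * t := fun x t => by rw [hξ]; ring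
  obtain rfl : q = darkSoliton q₀ α θp b := funext₂ fun x t => by
    rw [hq, mul_assoc _ (Complex.cos _), cos_sub_I_mul_div_cosh_eq_darkProfile, darkSoliton, hξ']
  obtain rfl : s = fun x t => (darkPotential q₀ θp b x t : ℂ) := funext₂ fun x t => by
    rw [hs, darkPotential, hξ', one_div]
    congr 1
    ring
  exact ⟨darkSoliton_sinhGordon q₀ α θp b hb, deriv_darkPotential q₀ α θp b,
    fun x t => congrArg _ (darkPotential_neg q₀ θp b x t)⟩

/-- The dark one-soliton `q(x,t) = q₀ e^{iαt} cos(θ₊ - iξ) sech ξ`,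
`ξ = q₀ x sin θ₊ + (αt/2) tan θ₊`, together with
`s = (1/2) q₀ α sin θ₊ tan θ₊ sech² ξ`, is an exact solution of the nonlocal
reverse space-time Sinh-Gordon equation `q_{xt} + 2sq = 0`,
`s_x = -∂_t(q(x,t)q(-x,-t))`, with `s(-x,-t) = s(x,t)`. -/
theorem rst_sinhGordon_dark_one_soliton (q₀ α θp : ℝ) (hq₀ : 0 < q₀)
    (hθ : θp ∈ Set.Ioo 0 Real.pi) (hθ' : θp ≠ Real.pi / 2)
    (ξ : ℝ → ℝ → ℝ)
    (hξ : ∀ x t : ℝ, ξ x t = q₀ * x * Real.sin θp + α * t / 2 * Real.tan θp)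
    (q s : ℝ → ℝ → ℂ)
    (hq : ∀ x t : ℝ, q x t =
      (q₀ : ℂ) * Complex.exp (Complex.I * (α : ℂ) * (t : ℂ)) *
        Complex.cos ((θp : ℂ) - Complex.I * (ξ x t : ℂ)) *
        (1 / Complex.cosh ((ξ x t : ℂ))))
    (hs : ∀ x t : ℝ, s x t =
      ((1 / 2 * q₀ * α * Real.sin θp * Real.tan θp * (1 / Real.cosh (ξ x t)) ^ 2 : ℝ) : ℂ)) :
    (∀ x t : ℝ,
      deriv (fun y : ℝ => deriv (fun τ : ℝ => q y τ) t) x + 2 * s x t * q x t = 0) ∧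
    (∀ x t : ℝ,
      deriv (fun y : ℝ => s y t) x = -deriv (fun τ : ℝ => q x τ * q (-x) (-τ)) t) ∧
    (∀ x t : ℝ, s (-x) (-t) = s x t) :=
  rst_sinhGordon_dark_one_soliton_general q₀ α θp hθ hθ' ξ hξ q s hq hs
end

section
/- Let q₀ > 0 and θ₊ ∈ ℝ. Define q : ℝ × ℝ → ℂ by q(x,t) := q₀ e^{2 i q₀² t} · [ e^{i θ₊} e^{2 q₀ x sin θ₊} + e^{-i θ₊} e^{2 q₀² t sin(2θ₊)} ] / [ e^{2 q₀ x sin θ₊} + e^{2 q₀² t sin(2θ₊)} ]. Then q is smooth (the denominator is everywhere positive) and satisfies, for all (x,t) ∈ ℝ², the focusing-sign nonlocal reverse space-time NLS equation i ∂_t q(x,t) = ∂_x² q(x,t) - 2 q(x,t)² q(-x,-t). -/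
lemma hasDerivAt_cexp_mul (w : ℂ) (r : ℝ) :
    HasDerivAt (fun y : ℝ => Complex.exp (w * y)) (w * Complex.exp (w * r)) r := by
  have h : HasDerivAt (fun y : ℝ => w * (y : ℂ)) w r := by
    simpa using (Complex.ofRealCLM.hasDerivAt (x := r)).const_mul w
  simpa [mul_comm] using h.cexp

lemma hasDerivAt_frac (C A B V w : ℂ) (y : ℝ)
    (hden : Complex.exp (w * y) + V ≠ 0) :
    HasDerivAt (fun y' : ℝ => C * (A * Complex.exp (w * y') + B * V) / (Complex.exp (w * y') + V))
      (C * w * (A - B) * V * Complex.exp (w * y) / (Complex.exp (w * y) + V) ^ 2) y := by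
  have hU := hasDerivAt_cexp_mul w y
  have hnum : HasDerivAt (fun y' : ℝ => C * (A * Complex.exp (w * y') + B * V))
      (C * (A * (w * Complex.exp (w * y)))) y := ((hU.const_mul A).add_const (B * V)).const_mul C
  have h := hnum.fun_div (hU.add_const V) hden
  refine h.congr_deriv ?_
  rw [div_eq_div_iff (pow_ne_zero 2 hden) (pow_ne_zero 2 hden)]
  ring

lemma hasDerivAt_frac2 (K V w : ℂ) (y : ℝ)
    (hden : Complex.exp (w * y) + V ≠ 0) :
    HasDerivAt (fun y' : ℝ => K * Complex.exp (w * y') / (Complex.exp (w * y') + V) ^ 2)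
      (K * w * Complex.exp (w * y) * (V - Complex.exp (w * y)) / (Complex.exp (w * y) + V) ^ 3) y := by
  have hU := hasDerivAt_cexp_mul w y
  have hd2 : HasDerivAt (fun y' : ℝ => (Complex.exp (w * y') + V) ^ 2)
      (w * Complex.exp (w * y) * (Complex.exp (w * y) + V) +
        (Complex.exp (w * y) + V) * (w * Complex.exp (w * y))) y := by
    simpa [pow_two] using (hU.add_const V).fun_mul (hU.add_const V)
  have h := (hU.const_mul K).fun_div hd2 (pow_ne_zero 2 hden)
  refine h.congr_deriv ?_
  rw [div_eq_div_iff (pow_ne_zero 2 (pow_ne_zero 2 hden)) (pow_ne_zero 3 hden)]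
  ring

lemma hasDerivAt_time (q₀' A B u c w : ℂ) (t : ℝ)
    (hden : u + Complex.exp (w * t) ≠ 0) :
    HasDerivAt (fun τ : ℝ => q₀' * Complex.exp (c * τ) * (A * u + B * Complex.exp (w * τ)) /
        (u + Complex.exp (w * τ)))
      (((q₀' * (c * Complex.exp (c * t)) * (A * u + B * Complex.exp (w * t)) +
          q₀' * Complex.exp (c * t) * (B * (w * Complex.exp (w * t)))) * (u + Complex.exp (w * t)) -
        q₀' * Complex.exp (c * t) * (A * u + B * Complex.exp (w * t)) * (w * Complex.exp (w * t))) /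
        (u + Complex.exp (w * t)) ^ 2) t := by
  have hE := hasDerivAt_cexp_mul c t
  have hV := hasDerivAt_cexp_mul w t
  exact ((hE.const_mul q₀').mul ((hV.const_mul B).const_add (A * u))).div (hV.const_add u) hden

lemma reduce_frac (i x y n m q e d : ℂ) (hd : d ≠ 0) (he : e ≠ 0)
    (h : i * x * d = y - 2 * q ^ 3 * e * n ^ 2 * m) :
    i * (x / d ^ 2) = y / d ^ 3 - 2 * (q * e * n / d) ^ 2 * (q * e⁻¹ * m / d) := by
  have h1 : y / d ^ 3 - 2 * (q * e * n / d) ^ 2 * (q * e⁻¹ * m / d) =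
      (y - 2 * q ^ 3 * e * n ^ 2 * m) / d ^ 3 := by
    field_simp
  have h2 : i * (x / d ^ 2) = (i * x * d) / d ^ 3 := by
    field_simp
  rw [h1, h2, h]

set_option maxHeartbeats 2000000 in
lemma soliton_pde (q₀ a b : ℝ) (A B : ℂ) (x t : ℝ) (f : ℝ → ℝ → ℂ)
    (hf : ∀ x t : ℝ, f x t =
      (q₀ : ℂ) * Complex.exp (2 * Complex.I * (q₀ : ℂ) ^ 2 * t) *
        (A * Complex.exp ((a : ℂ) * x) + B * Complex.exp ((b : ℂ) * t)) /
        (Complex.exp ((a : ℂ) * x) + Complex.exp ((b : ℂ) * t)))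
    (hden : ∀ x t : ℝ, Complex.exp ((a : ℂ) * x) + Complex.exp ((b : ℂ) * t) ≠ 0)
    (hA : A ≠ 0) (hB : B = A⁻¹)
    (ha : (a : ℂ) = -Complex.I * q₀ * (A - A⁻¹))
    (hb : (b : ℂ) = -Complex.I * (q₀ : ℂ) ^ 2 * (A ^ 2 - (A⁻¹) ^ 2)) :
    Complex.I * deriv (fun τ : ℝ => f x τ) t =
      deriv (fun y : ℝ => deriv (fun y' : ℝ => f y' t) y) x - 2 * (f x t) ^ 2 * f (-x) (-t) := by
  have hfx : (fun τ : ℝ => f x τ) = fun τ : ℝ =>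
      (q₀ : ℂ) * Complex.exp (2 * Complex.I * (q₀ : ℂ) ^ 2 * τ) *
        (A * Complex.exp ((a : ℂ) * x) + B * Complex.exp ((b : ℂ) * τ)) /
        (Complex.exp ((a : ℂ) * x) + Complex.exp ((b : ℂ) * τ)) := funext fun τ => hf x τ
  have ht := (hasDerivAt_time (q₀ : ℂ) A B (Complex.exp ((a : ℂ) * x))
    (2 * Complex.I * (q₀ : ℂ) ^ 2) (b : ℂ) t (hden x t)).deriv
  have hdx : (fun y : ℝ => deriv (fun y' : ℝ => f y' t) y) = fun y : ℝ =>
      (q₀ : ℂ) * Complex.exp (2 * Complex.I * (q₀ : ℂ) ^ 2 * t) * (a : ℂ) * (A - B) *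
        Complex.exp ((b : ℂ) * t) * Complex.exp ((a : ℂ) * y) /
        (Complex.exp ((a : ℂ) * y) + Complex.exp ((b : ℂ) * t)) ^ 2 := by
    funext y
    have hfr : (fun y' : ℝ => f y' t) = fun y' : ℝ =>
        (q₀ : ℂ) * Complex.exp (2 * Complex.I * (q₀ : ℂ) ^ 2 * t) *
          (A * Complex.exp ((a : ℂ) * y') + B * Complex.exp ((b : ℂ) * t)) /
          (Complex.exp ((a : ℂ) * y') + Complex.exp ((b : ℂ) * t)) := funext fun y' => hf y' t
    rw [hfr, (hasDerivAt_frac ((q₀ : ℂ) * Complex.exp (2 * Complex.I * (q₀ : ℂ) ^ 2 * t)) A B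
      (Complex.exp ((b : ℂ) * t)) (a : ℂ) y (hden y t)).deriv]
  have hd2 := (hasDerivAt_frac2 ((q₀ : ℂ) * Complex.exp (2 * Complex.I * (q₀ : ℂ) ^ 2 * t) *
    (a : ℂ) * (A - B) * Complex.exp ((b : ℂ) * t)) (Complex.exp ((b : ℂ) * t)) (a : ℂ) x
    (hden x t)).deriv
  rw [hfx, ht, hdx, hd2, hf x t, hf (-x) (-t)]
  have e1 : ((a : ℂ) * ((-x : ℝ) : ℂ)) = -((a : ℂ) * x) := by push_cast; ring
  have e2 : ((b : ℂ) * ((-t : ℝ) : ℂ)) = -((b : ℂ) * t) := by push_cast; ring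
  have e3 : (2 * Complex.I * (q₀ : ℂ) ^ 2 * ((-t : ℝ) : ℂ)) =
      -(2 * Complex.I * (q₀ : ℂ) ^ 2 * t) := by push_cast; ring
  have hd3 : (Complex.exp ((a : ℂ) * x))⁻¹ + (Complex.exp ((b : ℂ) * t))⁻¹ ≠ 0 := by
    have h := hden (-x) (-t)
    rwa [e1, e2, Complex.exp_neg, Complex.exp_neg] at h
  rw [e1, e2, e3, Complex.exp_neg, Complex.exp_neg, Complex.exp_neg]
  have hden1 := hden x t
  set U := Complex.exp ((a : ℂ) * x) with hUdef
  set V := Complex.exp ((b : ℂ) * t) with hVdef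
  set E := Complex.exp (2 * Complex.I * (q₀ : ℂ) ^ 2 * (t : ℂ)) with hEdef
  have hU0 : U ≠ 0 := by rw [hUdef]; exact Complex.exp_ne_zero _
  have hV0 : V ≠ 0 := by rw [hVdef]; exact Complex.exp_ne_zero _
  have hE0 : E ≠ 0 := by rw [hEdef]; exact Complex.exp_ne_zero _
  have hq3 : (q₀ : ℂ) * E⁻¹ * (A * U⁻¹ + B * V⁻¹) / (U⁻¹ + V⁻¹) =
      (q₀ : ℂ) * E⁻¹ * (A * V + B * U) / (U + V) := by
    rw [div_eq_div_iff hd3 hden1]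
    have hU' : U * U⁻¹ = 1 := mul_inv_cancel₀ hU0
    have hV' : V * V⁻¹ = 1 := mul_inv_cancel₀ hV0
    linear_combination ((q₀ : ℂ) * E⁻¹ * A - (q₀ : ℂ) * E⁻¹ * B) * hU' -
      ((q₀ : ℂ) * E⁻¹ * A - (q₀ : ℂ) * E⁻¹ * B) * hV'
  rw [hq3]
  refine reduce_frac _ _ _ _ _ _ _ _ hden1 hE0 ?_
  rw [hB, ha, hb]
  field_simp [hA]
  ring_nf
  simp only [Complex.I_sq]
  ring

/-- The dark one-soliton of the focusing-sign (σ = 1) nonlocal reverse space-time NLS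
equation: its denominator is everywhere positive, it is smooth, and it satisfies
`i q_t = q_xx - 2 q² q(-x,-t)`. -/
theorem rst_nls_focusing_dark_one_soliton (q₀ θp : ℝ) (hq₀ : 0 < q₀)
    (q : ℝ → ℝ → ℂ)
    (hq : ∀ x t : ℝ, q x t =
      (q₀ : ℂ) * Complex.exp (2 * Complex.I * (q₀ : ℂ) ^ 2 * (t : ℂ)) *
        (Complex.exp (Complex.I * (θp : ℂ)) * ((Real.exp (2 * q₀ * x * Real.sin θp) : ℝ) : ℂ) +
          Complex.exp (-Complex.I * (θp : ℂ)) *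
            ((Real.exp (2 * q₀ ^ 2 * t * Real.sin (2 * θp)) : ℝ) : ℂ)) /
        ((Real.exp (2 * q₀ * x * Real.sin θp) +
          Real.exp (2 * q₀ ^ 2 * t * Real.sin (2 * θp)) : ℝ) : ℂ)) :
    (∀ x t : ℝ,
      0 < Real.exp (2 * q₀ * x * Real.sin θp) + Real.exp (2 * q₀ ^ 2 * t * Real.sin (2 * θp))) ∧
    ContDiff ℝ (⊤ : ℕ∞) (fun p : ℝ × ℝ => q p.1 p.2) ∧
    (∀ x t : ℝ,
      Complex.I * deriv (fun τ : ℝ => q x τ) t =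
        deriv (fun y : ℝ => deriv (fun y' : ℝ => q y' t) y) x
          - 2 * (q x t) ^ 2 * q (-x) (-t)) := by
  have key : ∀ x t : ℝ, q x t =
      (q₀ : ℂ) * Complex.exp (2 * Complex.I * (q₀ : ℂ) ^ 2 * (t : ℂ)) *
        (Complex.exp (Complex.I * (θp : ℂ)) *
            Complex.exp (((2 * q₀ * Real.sin θp : ℝ) : ℂ) * (x : ℂ)) +
          Complex.exp (-Complex.I * (θp : ℂ)) *
            Complex.exp (((2 * q₀ ^ 2 * Real.sin (2 * θp) : ℝ) : ℂ) * (t : ℂ))) /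
        (Complex.exp (((2 * q₀ * Real.sin θp : ℝ) : ℂ) * (x : ℂ)) +
          Complex.exp (((2 * q₀ ^ 2 * Real.sin (2 * θp) : ℝ) : ℂ) * (t : ℂ))) := by
    intro x t
    rw [hq x t]
    have h1 : ((Real.exp (2 * q₀ * x * Real.sin θp) : ℝ) : ℂ) =
        Complex.exp (((2 * q₀ * Real.sin θp : ℝ) : ℂ) * (x : ℂ)) := by
      rw [Complex.ofReal_exp]; congr 1; push_cast; ring
    have h2 : ((Real.exp (2 * q₀ ^ 2 * t * Real.sin (2 * θp)) : ℝ) : ℂ) =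
        Complex.exp (((2 * q₀ ^ 2 * Real.sin (2 * θp) : ℝ) : ℂ) * (t : ℂ)) := by
      rw [Complex.ofReal_exp]; congr 1; push_cast; ring
    rw [Complex.ofReal_add, h1, h2]
  have hden : ∀ x t : ℝ,
      Complex.exp (((2 * q₀ * Real.sin θp : ℝ) : ℂ) * (x : ℂ)) +
        Complex.exp (((2 * q₀ ^ 2 * Real.sin (2 * θp) : ℝ) : ℂ) * (t : ℂ)) ≠ 0 := by
    intro x t
    have h1 : ((2 * q₀ * Real.sin θp : ℝ) : ℂ) * (x : ℂ) =
        ((2 * q₀ * Real.sin θp * x : ℝ) : ℂ) := by push_cast; ring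
    have h2 : ((2 * q₀ ^ 2 * Real.sin (2 * θp) : ℝ) : ℂ) * (t : ℂ) =
        ((2 * q₀ ^ 2 * Real.sin (2 * θp) * t : ℝ) : ℂ) := by push_cast; ring
    rw [h1, h2, ← Complex.ofReal_exp, ← Complex.ofReal_exp, ← Complex.ofReal_add]
    exact_mod_cast (by positivity : (0:ℝ) < Real.exp (2 * q₀ * Real.sin θp * x) +
      Real.exp (2 * q₀ ^ 2 * Real.sin (2 * θp) * t)).ne'
  have hAe : Complex.exp (Complex.I * (θp : ℂ)) =
      Complex.cos θp + Complex.sin θp * Complex.I := by rw [mul_comm, Complex.exp_mul_I]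
  have hAi : (Complex.exp (Complex.I * (θp : ℂ)))⁻¹ =
      Complex.cos θp - Complex.sin θp * Complex.I := by
    rw [← Complex.exp_neg,
      show -(Complex.I * (θp : ℂ)) = (-(θp : ℂ)) * Complex.I from by ring,
      Complex.exp_mul_I, Complex.cos_neg, Complex.sin_neg]
    ring
  have hB : Complex.exp (-Complex.I * (θp : ℂ)) = (Complex.exp (Complex.I * (θp : ℂ)))⁻¹ := by
    rw [neg_mul, Complex.exp_neg]
  have ha : ((2 * q₀ * Real.sin θp : ℝ) : ℂ) =
      -Complex.I * q₀ * (Complex.exp (Complex.I * (θp : ℂ)) -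
        (Complex.exp (Complex.I * (θp : ℂ)))⁻¹) := by
    rw [hAi, hAe]
    push_cast
    linear_combination (2 * (q₀ : ℂ) * Complex.sin (θp : ℂ)) * Complex.I_sq
  have hb : ((2 * q₀ ^ 2 * Real.sin (2 * θp) : ℝ) : ℂ) =
      -Complex.I * (q₀ : ℂ) ^ 2 *
        ((Complex.exp (Complex.I * (θp : ℂ))) ^ 2 -
          ((Complex.exp (Complex.I * (θp : ℂ)))⁻¹) ^ 2) := by
    rw [Real.sin_two_mul, hAi, hAe]
    push_cast
    linear_combination (4 * (q₀ : ℂ) ^ 2 * Complex.sin (θp : ℂ) * Complex.cos (θp : ℂ)) *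
      Complex.I_sq
  refine ⟨fun x t => by positivity, ?_, fun x t =>
    soliton_pde q₀ (2 * q₀ * Real.sin θp) (2 * q₀ ^ 2 * Real.sin (2 * θp))
      (Complex.exp (Complex.I * (θp : ℂ))) (Complex.exp (-Complex.I * (θp : ℂ))) x t q key hden
      (Complex.exp_ne_zero _) hB ha hb⟩
  have heq : (fun p : ℝ × ℝ => q p.1 p.2) = fun p : ℝ × ℝ =>
      (q₀ : ℂ) * Complex.exp (2 * Complex.I * (q₀ : ℂ) ^ 2 * (p.2 : ℂ)) *
        (Complex.exp (Complex.I * (θp : ℂ)) *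
            Complex.exp (((2 * q₀ * Real.sin θp : ℝ) : ℂ) * (p.1 : ℂ)) +
          Complex.exp (-Complex.I * (θp : ℂ)) *
            Complex.exp (((2 * q₀ ^ 2 * Real.sin (2 * θp) : ℝ) : ℂ) * (p.2 : ℂ))) /
        (Complex.exp (((2 * q₀ * Real.sin θp : ℝ) : ℂ) * (p.1 : ℂ)) +
          Complex.exp (((2 * q₀ ^ 2 * Real.sin (2 * θp) : ℝ) : ℂ) * (p.2 : ℂ))) :=
    funext fun p => key p.1 p.2
  rw [heq]
  have h1 : ContDiff ℝ (⊤ : ℕ∞) (fun p : ℝ × ℝ => ((p.1 : ℂ))) :=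
    Complex.ofRealCLM.contDiff.comp contDiff_fst
  have h2 : ContDiff ℝ (⊤ : ℕ∞) (fun p : ℝ × ℝ => ((p.2 : ℂ))) :=
    Complex.ofRealCLM.contDiff.comp contDiff_snd
  have hexp : ∀ (w : ℂ) (g : ℝ × ℝ → ℂ), ContDiff ℝ (⊤ : ℕ∞) g →
      ContDiff ℝ (⊤ : ℕ∞) (fun p => Complex.exp (w * g p)) := fun w g hg =>
    (contDiff_const.mul hg).cexp
  have hn : ContDiff ℝ (⊤ : ℕ∞) (fun p : ℝ × ℝ =>
      (q₀ : ℂ) * Complex.exp (2 * Complex.I * (q₀ : ℂ) ^ 2 * (p.2 : ℂ)) *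
        (Complex.exp (Complex.I * (θp : ℂ)) *
            Complex.exp (((2 * q₀ * Real.sin θp : ℝ) : ℂ) * (p.1 : ℂ)) +
          Complex.exp (-Complex.I * (θp : ℂ)) *
            Complex.exp (((2 * q₀ ^ 2 * Real.sin (2 * θp) : ℝ) : ℂ) * (p.2 : ℂ)))) :=
    (contDiff_const.mul (hexp _ _ h2)).mul
      ((contDiff_const.mul (hexp _ _ h1)).add (contDiff_const.mul (hexp _ _ h2)))
  have hd : ContDiff ℝ (⊤ : ℕ∞) (fun p : ℝ × ℝ =>
      (Complex.exp (((2 * q₀ * Real.sin θp : ℝ) : ℂ) * (p.1 : ℂ)) +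
        Complex.exp (((2 * q₀ ^ 2 * Real.sin (2 * θp) : ℝ) : ℂ) * (p.2 : ℂ)))⁻¹) :=
    ((hexp _ _ h1).add (hexp _ _ h2)).inv (fun p => hden p.1 p.2)
  simpa only [div_eq_mul_inv] using hn.mul hd
end

section
/- Let q₀ > 0 and θ₊ ∈ ℝ. Define q : ℝ × ℝ → ℂ by q(x,t) := q₀ e^{2 i q₀² t} [ i sin θ₊ + cos θ₊ · tanh( q₀ cos θ₊ · (x + 2 q₀ t sin θ₊) ) ]. Then q is smooth and satisfies, for all (x,t) ∈ ℝ², the defocusing-sign nonlocal reverse space-time NLS equation i ∂_t q(x,t) = ∂_x² q(x,t) + 2 q(x,t)² q(-x,-t). -/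
lemma tanh_hasDerivAt (x : ℝ) : HasDerivAt Real.tanh (1 - Real.tanh x ^ 2) x := by
  have h := (Real.hasDerivAt_sinh x).fun_div (Real.hasDerivAt_cosh x) (Real.cosh_pos x).ne'
  have hfun : Real.tanh = fun y => Real.sinh y / Real.cosh y :=
    funext fun y => Real.tanh_eq_sinh_div_cosh y
  rw [hfun]
  refine h.congr_deriv ?_
  have hc := (Real.cosh_pos x).ne'
  have h1 := Real.cosh_sq_sub_sinh_sq x
  field_simp

lemma contDiff_tanh' : ContDiff ℝ (⊤ : ℕ∞) Real.tanh := by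
  have hfun : Real.tanh = fun y => Real.sinh y / Real.cosh y :=
    funext fun y => Real.tanh_eq_sinh_div_cosh y
  rw [hfun]
  exact Real.contDiff_sinh.div Real.contDiff_cosh (fun x => (Real.cosh_pos x).ne')

/-- The dark one-soliton of the defocusing-sign (σ = -1) nonlocal reverse space-time
NLS equation: `q(x,t) = q₀ e^{2iq₀²t}(i sin θ₊ + cos θ₊ tanh(q₀ cos θ₊ (x + 2q₀t sin θ₊)))`
is smooth and satisfies `i q_t = q_xx + 2 q² q(-x,-t)`. -/
theorem rst_nls_defocusing_dark_one_soliton (q₀ θp : ℝ) (hq₀ : 0 < q₀)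
    (q : ℝ → ℝ → ℂ)
    (hq : ∀ x t : ℝ, q x t =
      (q₀ : ℂ) * Complex.exp (2 * Complex.I * (q₀ : ℂ) ^ 2 * (t : ℂ)) *
        (Complex.I * (Real.sin θp : ℂ) +
          (Real.cos θp : ℂ) *
            ((Real.tanh (q₀ * Real.cos θp * (x + 2 * q₀ * t * Real.sin θp)) : ℝ) : ℂ))) :
    ContDiff ℝ (⊤ : ℕ∞) (fun p : ℝ × ℝ => q p.1 p.2) ∧
    (∀ x t : ℝ,
      Complex.I * deriv (fun τ : ℝ => q x τ) t =
        deriv (fun y : ℝ => deriv (fun y' : ℝ => q y' t) y) x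
          + 2 * (q x t) ^ 2 * q (-x) (-t)) := by
  set s := Real.sin θp with hs
  set c := Real.cos θp with hc
  constructor
  · have hfun : (fun p : ℝ × ℝ => q p.1 p.2) = fun p : ℝ × ℝ =>
        (q₀ : ℂ) * Complex.exp (2 * Complex.I * (q₀ : ℂ) ^ 2 * (p.2 : ℂ)) *
        (Complex.I * (s : ℂ) + (c : ℂ) *
          ((Real.tanh (q₀ * c * (p.1 + 2 * q₀ * p.2 * s)) : ℝ) : ℂ)) :=
      funext fun p => hq p.1 p.2
    rw [hfun]
    have h1 : ContDiff ℝ (⊤ : ℕ∞) (fun p : ℝ × ℝ => ((p.2 : ℝ) : ℂ)) :=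
      Complex.ofRealCLM.contDiff.comp contDiff_snd
    have h2 : ContDiff ℝ (⊤ : ℕ∞) (fun p : ℝ × ℝ => q₀ * c * (p.1 + 2 * q₀ * p.2 * s)) := by
      fun_prop
    exact (contDiff_const.mul ((contDiff_const.mul h1).cexp)).mul
      (contDiff_const.add (contDiff_const.mul
        (Complex.ofRealCLM.contDiff.comp (contDiff_tanh'.comp h2))))
  · intro x t
    -- abbreviations
    have hE : HasDerivAt (fun τ : ℝ => Complex.exp (2 * Complex.I * (q₀ : ℂ) ^ 2 * (τ : ℂ)))
        (2 * Complex.I * (q₀ : ℂ) ^ 2 * Complex.exp (2 * Complex.I * (q₀ : ℂ) ^ 2 * (t : ℂ))) t := by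
      have h := (((hasDerivAt_id ((t : ℝ) : ℂ)).const_mul (2 * Complex.I * (q₀ : ℂ) ^ 2)).cexp).comp_ofReal
      simpa [mul_comm] using h
    have hu_t : HasDerivAt (fun τ : ℝ => q₀ * c * (x + 2 * q₀ * τ * s)) (q₀ * c * (2 * q₀ * s)) t := by
      have h : HasDerivAt (fun τ : ℝ => q₀ * c * (2 * q₀ * s) * τ + q₀ * c * x)
          (q₀ * c * (2 * q₀ * s)) t := by
        simpa using ((hasDerivAt_id t).const_mul (q₀ * c * (2 * q₀ * s))).add_const (q₀ * c * x)
      have hfe : (fun τ : ℝ => q₀ * c * (2 * q₀ * s) * τ + q₀ * c * x)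
          = fun τ : ℝ => q₀ * c * (x + 2 * q₀ * τ * s) := by funext τ; ring
      exact hfe ▸ h
    have hT_t : HasDerivAt (fun τ : ℝ => ((Real.tanh (q₀ * c * (x + 2 * q₀ * τ * s)) : ℝ) : ℂ))
        ((((1 - Real.tanh (q₀ * c * (x + 2 * q₀ * t * s)) ^ 2) * (q₀ * c * (2 * q₀ * s)) : ℝ)) : ℂ) t :=
      (((tanh_hasDerivAt _).comp t hu_t)).ofReal_comp
    have hqt : HasDerivAt (fun τ : ℝ => q x τ)
        ((q₀ : ℂ) * (2 * Complex.I * (q₀ : ℂ) ^ 2 * Complex.exp (2 * Complex.I * (q₀ : ℂ) ^ 2 * (t : ℂ))) *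
          (Complex.I * (s : ℂ) + (c : ℂ) * ((Real.tanh (q₀ * c * (x + 2 * q₀ * t * s)) : ℝ) : ℂ)) +
         (q₀ : ℂ) * Complex.exp (2 * Complex.I * (q₀ : ℂ) ^ 2 * (t : ℂ)) *
          ((c : ℂ) * ((((1 - Real.tanh (q₀ * c * (x + 2 * q₀ * t * s)) ^ 2) * (q₀ * c * (2 * q₀ * s)) : ℝ)) : ℂ))) t := by
      have hfun : (fun τ : ℝ => q x τ) = fun τ : ℝ =>
          (q₀ : ℂ) * Complex.exp (2 * Complex.I * (q₀ : ℂ) ^ 2 * (τ : ℂ)) *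
          (Complex.I * (s : ℂ) + (c : ℂ) *
            ((Real.tanh (q₀ * c * (x + 2 * q₀ * τ * s)) : ℝ) : ℂ)) := funext fun τ => hq x τ
      rw [hfun]
      exact (hE.const_mul (q₀ : ℂ)).mul ((hT_t.const_mul (c : ℂ)).const_add (Complex.I * (s : ℂ)))
    -- first x-derivative, at every point y
    have hu_x : ∀ y : ℝ, HasDerivAt (fun y' : ℝ => q₀ * c * (y' + 2 * q₀ * t * s)) (q₀ * c) y := by
      intro y
      have h : HasDerivAt (fun y' : ℝ => q₀ * c * y' + q₀ * c * (2 * q₀ * t * s)) (q₀ * c) y := by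
        simpa using ((hasDerivAt_id y).const_mul (q₀ * c)).add_const (q₀ * c * (2 * q₀ * t * s))
      have hfe : (fun y' : ℝ => q₀ * c * y' + q₀ * c * (2 * q₀ * t * s))
          = fun y' : ℝ => q₀ * c * (y' + 2 * q₀ * t * s) := by funext y'; ring
      exact hfe ▸ h
    have hqx : ∀ y : ℝ, HasDerivAt (fun y' : ℝ => q y' t)
        ((q₀ : ℂ) * Complex.exp (2 * Complex.I * (q₀ : ℂ) ^ 2 * (t : ℂ)) *
          ((c : ℂ) * ((((1 - Real.tanh (q₀ * c * (y + 2 * q₀ * t * s)) ^ 2) * (q₀ * c) : ℝ)) : ℂ))) y := by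
      intro y
      have hT_x : HasDerivAt (fun y' : ℝ => ((Real.tanh (q₀ * c * (y' + 2 * q₀ * t * s)) : ℝ) : ℂ))
          ((((1 - Real.tanh (q₀ * c * (y + 2 * q₀ * t * s)) ^ 2) * (q₀ * c) : ℝ)) : ℂ) y :=
        (((tanh_hasDerivAt _).comp y (hu_x y))).ofReal_comp
      have hfun : (fun y' : ℝ => q y' t) = fun y' : ℝ =>
          (q₀ : ℂ) * Complex.exp (2 * Complex.I * (q₀ : ℂ) ^ 2 * (t : ℂ)) *
          (Complex.I * (s : ℂ) + (c : ℂ) *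
            ((Real.tanh (q₀ * c * (y' + 2 * q₀ * t * s)) : ℝ) : ℂ)) := funext fun y' => hq y' t
      rw [hfun]
      exact ((hT_x.const_mul (c : ℂ)).const_add (Complex.I * (s : ℂ))).const_mul
        ((q₀ : ℂ) * Complex.exp (2 * Complex.I * (q₀ : ℂ) ^ 2 * (t : ℂ)))
    have hder1 : (fun y : ℝ => deriv (fun y' : ℝ => q y' t) y) = fun y : ℝ =>
        (q₀ : ℂ) * Complex.exp (2 * Complex.I * (q₀ : ℂ) ^ 2 * (t : ℂ)) *
          ((c : ℂ) * ((((1 - Real.tanh (q₀ * c * (y + 2 * q₀ * t * s)) ^ 2) * (q₀ * c) : ℝ)) : ℂ)) :=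
      funext fun y => (hqx y).deriv
    -- second x-derivative
    have hTx2 : HasDerivAt (fun y : ℝ => Real.tanh (q₀ * c * (y + 2 * q₀ * t * s)))
        ((1 - Real.tanh (q₀ * c * (x + 2 * q₀ * t * s)) ^ 2) * (q₀ * c)) x :=
      (tanh_hasDerivAt _).comp x (hu_x x)
    have hqxx :=
      ((((((hTx2.fun_pow 2).const_sub 1).mul_const (q₀ * c))).ofReal_comp.const_mul (c : ℂ)).const_mul
        ((q₀ : ℂ) * Complex.exp (2 * Complex.I * (q₀ : ℂ) ^ 2 * (t : ℂ))))
    rw [hqt.deriv, hder1, hqxx.deriv, hq x t, hq (-x) (-t)]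
    -- algebra
    have harg : q₀ * c * (-x + 2 * q₀ * (-t) * s) = -(q₀ * c * (x + 2 * q₀ * t * s)) := by ring
    rw [harg, Real.tanh_neg]
    have hexp : (2 * Complex.I * (q₀ : ℂ) ^ 2 * ((-t : ℝ) : ℂ))
        = -(2 * Complex.I * (q₀ : ℂ) ^ 2 * (t : ℂ)) := by push_cast; ring
    rw [hexp, Complex.exp_neg]
    have hsc : (s : ℂ) ^ 2 + (c : ℂ) ^ 2 = 1 := by
      rw [hs, hc]; exact_mod_cast Real.sin_sq_add_cos_sq θp
    have hI := Complex.I_sq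
    have hEne := Complex.exp_ne_zero (2 * Complex.I * (q₀ : ℂ) ^ 2 * (t : ℂ))
    push_cast
    field_simp
    linear_combination (q₀ : ℂ) ^ 3 * (Complex.I * (s:ℂ) * (c:ℂ) ^ 2 + (c:ℂ) ^ 3 * Complex.tanh ((q₀:ℂ) * (c:ℂ) * ((x:ℂ) + (q₀:ℂ) * 2 * (t:ℂ) * (s:ℂ)))) * hI
      - (q₀ : ℂ) ^ 3 * (Complex.I ^ 3 * (s:ℂ) + Complex.I ^ 2 * (c:ℂ) * Complex.tanh ((q₀:ℂ) * (c:ℂ) * ((x:ℂ) + (q₀:ℂ) * 2 * (t:ℂ) * (s:ℂ)))) * hsc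
end

section
/- Let q₀ > 0, α ∈ ℝ, and θ₊ ∈ (0, π) with θ₊ ≠ π/2. Define ξ(x,t) := q₀ x sin θ₊ + (α t / 2) tan θ₊, and define q(x,t) := q₀ e^{i α t} [ cos θ₊ + i sin θ₊ · coth(ξ(x,t)) ] and s(x,t) := (1/2) q₀ α sin θ₊ tan θ₊ · ( 1 - coth²(ξ(x,t)) ) on the open set Ω := { (x,t) : ξ(x,t) ≠ 0 }. Then for all (x,t) ∈ Ω: (i) ∂_x ∂_t q(x,t) + 2 s(x,t) q(x,t) = 0; (ii) ∂_x s(x,t) = -∂_t ( q(x,t) q(-x,-t) ) (note (-x,-t) ∈ Ω whenever (x,t) ∈ Ω); and (iii) s(-x,-t) = s(x,t). That is, q is a singular bright one-soliton solution of the nonlocal reverse space-time Sinh-Gordon equation, singular exactly along the space-time line ξ(x,t) = 0. -/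
/-!
Write `ξ = a x + b t` with `a = q₀ sin θ₊`, `b = (α/2) tan θ₊`, so that `s = a b (1 - coth² ξ)`.
Only two properties of `coth` matter: the Riccati equation `coth' = 1 - coth²` and oddness.
The Riccati equation gives `∂ₓ∂ₜ q = q₀ e^{iαt} a (1 - coth² ξ) i sin θ₊ (iα - 2 b coth ξ)`,
which equals `-2 s q` precisely because `2 b cos θ₊ = α sin θ₊`.
Since `ξ` and `coth` are odd, `q(-x,-t)` is `q₀ e^{-iαt} (cos θ₊ - i sin θ₊ coth ξ)`, so
`q(x,t) q(-x,-t) = q₀² (cos² θ₊ + sin² θ₊ coth² ξ)` is real, and both sides of the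
constraint become `-2 a² b coth ξ (1 - coth² ξ)`.
-/

open Complex Topology

theorem Real.hasDerivAt_cosh_div_sinh {z : ℝ} (hz : z ≠ 0) :
    HasDerivAt (fun w => Real.cosh w / Real.sinh w) (1 - (Real.cosh z / Real.sinh z) ^ 2) z := by
  have hsinh : Real.sinh z ≠ 0 := Real.sinh_ne_zero.mpr hz
  refine ((Real.hasDerivAt_cosh z).div (Real.hasDerivAt_sinh z) hsinh).congr_deriv ?_
  field_simp

theorem hasDerivAt_exp_I_mul_ofReal (α t : ℝ) :
    HasDerivAt (fun τ : ℝ => exp (I * α * τ)) (I * α * exp (I * α * t)) t := by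
  simpa [mul_comm] using (((hasDerivAt_id (t : ℂ)).const_mul (I * α)).cexp).comp_ofReal

namespace RSTSinhGordon

variable {f : ℝ → ℝ} {U : Set ℝ} {ξ : ℝ → ℝ → ℝ} {q s : ℝ → ℝ → ℂ} {a b q₀ α c σ x t : ℝ}

theorem xi_neg (hξ : ∀ x t, ξ x t = a * x + b * t) (x t : ℝ) : ξ (-x) (-t) = -ξ x t := by
  rw [hξ, hξ]; ring

theorem hasDerivAt_xi_left (hξ : ∀ x t, ξ x t = a * x + b * t) :
    HasDerivAt (fun y => ξ y t) a x := by
  simp only [hξ]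
  simpa using ((hasDerivAt_id x).const_mul a).add_const (b * t)

theorem hasDerivAt_xi_right (hξ : ∀ x t, ξ x t = a * x + b * t) : HasDerivAt (ξ x) b t := by
  rw [funext (hξ x)]
  simpa using ((hasDerivAt_id t).const_mul b).const_add (a * x)

theorem hasDerivAt_q_right (hξ : ∀ x t, ξ x t = a * x + b * t)
    (hq : ∀ x t, q x t = q₀ * exp (I * α * t) * (c + I * σ * f (ξ x t)))
    (hf : HasDerivAt f (1 - f (ξ x t) ^ 2) (ξ x t)) :
    HasDerivAt (q x) (q₀ * exp (I * α * t) *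
      (I * α * (c + I * σ * f (ξ x t)) + I * σ * b * (1 - f (ξ x t) ^ 2))) t := by
  have hprofile := ((hf.comp t (hasDerivAt_xi_right hξ)).ofReal_comp.const_mul (I * σ)).const_add
    (c : ℂ)
  have hqx : q x = fun τ : ℝ => q₀ * exp (I * α * τ) * (c + I * σ * f (ξ x τ)) := funext (hq x)
  rw [hqx]
  refine (((hasDerivAt_exp_I_mul_ofReal α t).const_mul (q₀ : ℂ)).mul hprofile).congr_deriv ?_
  push_cast [Function.comp_apply]
  ring

theorem deriv_deriv_q (hU : IsOpen U) (hf : ∀ z ∈ U, HasDerivAt f (1 - f z ^ 2) z)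
    (hξ : ∀ x t, ξ x t = a * x + b * t)
    (hq : ∀ x t, q x t = q₀ * exp (I * α * t) * (c + I * σ * f (ξ x t)))
    (hbc : 2 * b * c = α * σ) (hx : ξ x t ∈ U) :
    deriv (fun y => deriv (q y) t) x = -2 * a * b * (1 - f (ξ x t) ^ 2) * q x t := by
  have hbc' : (2 * b * c : ℂ) = α * σ := by exact_mod_cast hbc
  have hnear : ∀ᶠ y in 𝓝 x, ξ y t ∈ U :=
    (hasDerivAt_xi_left hξ).continuousAt.preimage_mem_nhds (hU.mem_nhds hx)
  have hfx := ((hf _ hx).comp x (hasDerivAt_xi_left hξ)).ofReal_comp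
  have hqt := (((hfx.const_mul (I * σ)).const_add (c : ℂ)).const_mul (I * α)).add
    (((hfx.pow 2).const_sub 1).const_mul (I * σ * b))
  rw [((hqt.const_mul (q₀ * exp (I * α * t))).congr_of_eventuallyEq
    (hnear.mono fun y hy => (hasDerivAt_q_right hξ hq (hf _ hy)).deriv)).deriv, hq]
  push_cast [Function.comp_apply]
  linear_combination ((q₀ : ℂ) * exp (I * α * t) * a * (1 - (f (ξ x t) : ℂ) ^ 2)) * hbc'
    + (q₀ * exp (I * α * t) * α * σ * a * (1 - (f (ξ x t) : ℂ) ^ 2)) * I_sq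

theorem q_mul_q_neg (hodd : ∀ z, f (-z) = -f z) (hξ : ∀ x t, ξ x t = a * x + b * t)
    (hq : ∀ x t, q x t = q₀ * exp (I * α * t) * (c + I * σ * f (ξ x t))) (x t : ℝ) :
    q x t * q (-x) (-t) = ((q₀ ^ 2 * (c ^ 2 + σ ^ 2 * f (ξ x t) ^ 2) : ℝ) : ℂ) := by
  have hphase : exp (I * α * t) * exp (I * α * (-t : ℝ)) = 1 := by
    rw [← Complex.exp_add, Complex.ofReal_neg, mul_neg, add_neg_cancel, Complex.exp_zero]
  rw [hq, hq, xi_neg hξ, hodd, Complex.ofReal_neg (f _)]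
  push_cast [- Complex.ofReal_neg]
  linear_combination (q₀ ^ 2 * (c + I * σ * f (ξ x t)) * (c - I * σ * f (ξ x t)) : ℂ) * hphase
    - (q₀ ^ 2 * σ ^ 2 * f (ξ x t) ^ 2 : ℂ) * I_sq

theorem deriv_s_eq_neg_deriv_q_mul_q_neg (hf : HasDerivAt f (1 - f (ξ x t) ^ 2) (ξ x t))
    (hodd : ∀ z, f (-z) = -f z) (hξ : ∀ x t, ξ x t = a * x + b * t)
    (hq : ∀ x t, q x t = q₀ * exp (I * α * t) * (c + I * σ * f (ξ x t)))
    (hs : ∀ x t, s x t = ((a * b * (1 - f (ξ x t) ^ 2) : ℝ) : ℂ)) (ha : a = q₀ * σ) :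
    deriv (fun y => s y t) x = -deriv (fun τ => q x τ * q (-x) (-τ)) t := by
  have hfx := (hf.comp x (hasDerivAt_xi_left hξ)).pow 2
  have hft := (hf.comp t (hasDerivAt_xi_right hξ)).pow 2
  have hsx : HasDerivAt (fun y => s y t)
      (a * b * -(2 * f (ξ x t) * ((1 - f (ξ x t) ^ 2) * a)) : ℝ) x := by
    simp only [hs]
    exact ((hfx.const_sub 1).const_mul (a * b)).ofReal_comp.congr_deriv (by
      simp only [Function.comp_apply]; push_cast; ring)
  have hqq : HasDerivAt (fun τ => q x τ * q (-x) (-τ))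
      (q₀ ^ 2 * (σ ^ 2 * (2 * f (ξ x t) * ((1 - f (ξ x t) ^ 2) * b))) : ℝ) t := by
    simp only [q_mul_q_neg hodd hξ hq]
    exact (((hft.const_mul (σ ^ 2)).const_add (c ^ 2)).const_mul (q₀ ^ 2)).ofReal_comp.congr_deriv
      (by simp only [Function.comp_apply]; push_cast; ring)
  rw [hsx.deriv, hqq.deriv, ha]
  push_cast
  ring

end RSTSinhGordon

theorem rst_sinhGordon_singular_bright_one_soliton_general (q₀ α θp : ℝ)
    (hθ : θp ∈ Set.Ioo 0 Real.pi) (hθ' : θp ≠ Real.pi / 2)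
    (coth : ℝ → ℝ) (hcoth : ∀ z : ℝ, coth z = Real.cosh z / Real.sinh z)
    (ξ : ℝ → ℝ → ℝ)
    (hξ : ∀ x t : ℝ, ξ x t = q₀ * x * Real.sin θp + α * t / 2 * Real.tan θp)
    (q s : ℝ → ℝ → ℂ)
    (hq : ∀ x t : ℝ, q x t =
      (q₀ : ℂ) * Complex.exp (Complex.I * (α : ℂ) * (t : ℂ)) *
        ((Real.cos θp : ℂ) + Complex.I * (Real.sin θp : ℂ) * ((coth (ξ x t) : ℝ) : ℂ)))
    (hs : ∀ x t : ℝ, s x t =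
      ((1 / 2 * q₀ * α * Real.sin θp * Real.tan θp * (1 - coth (ξ x t) ^ 2) : ℝ) : ℂ)) :
    (∀ x t : ℝ, ξ x t ≠ 0 → ξ (-x) (-t) ≠ 0) ∧
    (∀ x t : ℝ, ξ x t ≠ 0 →
      deriv (fun y : ℝ => deriv (fun τ : ℝ => q y τ) t) x + 2 * s x t * q x t = 0) ∧
    (∀ x t : ℝ, ξ x t ≠ 0 →
      deriv (fun y : ℝ => s y t) x = -deriv (fun τ : ℝ => q x τ * q (-x) (-τ)) t) ∧
    (∀ x t : ℝ, ξ x t ≠ 0 → s (-x) (-t) = s x t) := by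
  have hcos : Real.cos θp ≠ 0 := by
    rcases hθ'.lt_or_gt with h | h
    · exact (Real.cos_pos_of_mem_Ioo ⟨by linarith [hθ.1], h⟩).ne'
    · exact (Real.cos_neg_of_pi_div_two_lt_of_lt h (by linarith [hθ.2, Real.pi_pos])).ne
  have hcoth' : ∀ z ∈ ({0}ᶜ : Set ℝ), HasDerivAt coth (1 - coth z ^ 2) z := by
    intro z hz
    rw [funext hcoth]
    exact Real.hasDerivAt_cosh_div_sinh hz
  have hodd : ∀ z, coth (-z) = -coth z := by
    simp only [hcoth, Real.cosh_neg, Real.sinh_neg, div_neg, implies_true]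
  have hξ' : ∀ x t, ξ x t = q₀ * Real.sin θp * x + α / 2 * Real.tan θp * t := by
    intro x t; rw [hξ]; ring
  have hs' : ∀ x t, s x t =
      ((q₀ * Real.sin θp * (α / 2 * Real.tan θp) * (1 - coth (ξ x t) ^ 2) : ℝ) : ℂ) := by
    intro x t; rw [hs]; ring_nf
  refine ⟨fun x t h => ?_, fun x t h => ?_, fun x t h => ?_, fun x t _ => ?_⟩
  · rwa [RSTSinhGordon.xi_neg hξ', neg_ne_zero]
  · rw [RSTSinhGordon.deriv_deriv_q isOpen_compl_singleton hcoth' hξ' hq ?_ h, hs']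
    · push_cast; ring
    · rw [← Real.tan_mul_cos hcos]; ring
  · exact RSTSinhGordon.deriv_s_eq_neg_deriv_q_mul_q_neg (hcoth' _ h) hodd hξ' hq hs' rfl
  · rw [hs, hs, RSTSinhGordon.xi_neg hξ', hodd, neg_sq]

/-- The singular bright one-soliton `q(x,t) = q₀ e^{iαt}(cos θ₊ + i sin θ₊ coth ξ)`,
`ξ = q₀ x sin θ₊ + (αt/2) tan θ₊`, with `s = (1/2) q₀ α sin θ₊ tan θ₊ (1 - coth² ξ)`,
solves the nonlocal reverse space-time Sinh-Gordon equation on the open set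
`Ω = {ξ ≠ 0}`; moreover `Ω` is invariant under `(x,t) ↦ (-x,-t)` and
`s(-x,-t) = s(x,t)`. -/
theorem rst_sinhGordon_singular_bright_one_soliton (q₀ α θp : ℝ) (hq₀ : 0 < q₀)
    (hθ : θp ∈ Set.Ioo 0 Real.pi) (hθ' : θp ≠ Real.pi / 2)
    (coth : ℝ → ℝ) (hcoth : ∀ z : ℝ, coth z = Real.cosh z / Real.sinh z)
    (ξ : ℝ → ℝ → ℝ)
    (hξ : ∀ x t : ℝ, ξ x t = q₀ * x * Real.sin θp + α * t / 2 * Real.tan θp)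
    (q s : ℝ → ℝ → ℂ)
    (hq : ∀ x t : ℝ, q x t =
      (q₀ : ℂ) * Complex.exp (Complex.I * (α : ℂ) * (t : ℂ)) *
        ((Real.cos θp : ℂ) + Complex.I * (Real.sin θp : ℂ) * ((coth (ξ x t) : ℝ) : ℂ)))
    (hs : ∀ x t : ℝ, s x t =
      ((1 / 2 * q₀ * α * Real.sin θp * Real.tan θp * (1 - coth (ξ x t) ^ 2) : ℝ) : ℂ)) :
    (∀ x t : ℝ, ξ x t ≠ 0 → ξ (-x) (-t) ≠ 0) ∧
    (∀ x t : ℝ, ξ x t ≠ 0 →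
      deriv (fun y : ℝ => deriv (fun τ : ℝ => q y τ) t) x + 2 * s x t * q x t = 0) ∧
    (∀ x t : ℝ, ξ x t ≠ 0 →
      deriv (fun y : ℝ => s y t) x = -deriv (fun τ : ℝ => q x τ * q (-x) (-τ)) t) ∧
    (∀ x t : ℝ, ξ x t ≠ 0 → s (-x) (-t) = s x t) :=
  rst_sinhGordon_singular_bright_one_soliton_general q₀ α θp hθ hθ' coth hcoth ξ hξ q s hq hs
end

section
/- Let q₀ > 0 and θ₊ ∈ (0, π) with θ₊ ≠ π/2. Define ξ(x,t) := q₀ cos θ₊ · (x + 2 q₀ t sin θ₊), and on the open set Ω := { (x,t) : ξ(x,t) ≠ 0 } define q(x,t) := q₀ e^{2 i q₀² t} · [ (1 + e^{4 ξ(x,t)} + 2 e^{2 ξ(x,t)}) cos θ₊ + i sin θ₊ ( e^{4 ξ(x,t)} - 1 ) ] / ( e^{4 ξ(x,t)} - 1 ). Then (-x,-t) ∈ Ω whenever (x,t) ∈ Ω, and for all (x,t) ∈ Ω, q satisfies i ∂_t q(x,t) = ∂_x² q(x,t) + 2 q(x,t)² q(-x,-t). That is, q is a bright one-soliton solution of the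 nonlocal reverse space-time NLS equation with σ = -1, singular exactly along the space-time line ξ(x,t) = 0. -/
/-!
Cancelling the factor `e^{2ξ} + 1` in the quotient shows `q = q₀ e^{2iq₀²t} (cos θ₊ coth ξ + i sin θ₊)`
off the line `ξ = 0`. More generally `q₀ e^{2iq₀²t} (cos θ f(ξ) + i sin θ)` solves the equation
wherever the profile `f` is odd and satisfies the Riccati equation `f' = 1 - f²`: as `ξ` is odd in
`(x, t)`, the reflected value is `q₀ e^{-2iq₀²t} (-cos θ f + i sin θ)`, and after dividing by
`2 q₀³ e^{2iq₀²t} (cos θ f + i sin θ)` the equation reduces to `cos² θ + sin² θ = 1`.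
The profile `coth` is odd and satisfies the Riccati equation on `ℝ \ {0}`.
-/

namespace NonlocalNLS

section Coth

open Real

noncomputable def coth (v : ℝ) : ℝ := cosh v / sinh v

lemma coth_neg (v : ℝ) : coth (-v) = -coth v := by
  simp only [coth, cosh_neg, sinh_neg, div_neg]

lemma hasDerivAt_coth {v : ℝ} (hv : v ≠ 0) : HasDerivAt coth (1 - coth v ^ 2) v := by
  refine ((hasDerivAt_cosh v).div (hasDerivAt_sinh v) (sinh_ne_zero.mpr hv)).congr_deriv ?_
  rw [coth, div_pow]
  field_simp

lemma exp_four_mul_sub_one_ne_zero {v : ℝ} (hv : v ≠ 0) : exp (4 * v) - 1 ≠ 0 := by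
  rw [sub_ne_zero, Ne, exp_eq_one_iff]
  positivity

lemma coth_eq_exp {v : ℝ} (hv : v ≠ 0) :
    coth v = (1 + exp (4 * v) + 2 * exp (2 * v)) / (exp (4 * v) - 1) := by
  have h2 : exp (2 * v) = exp v ^ 2 := by rw [← exp_nat_mul]; ring_nf
  have h4 : exp (4 * v) = exp v ^ 4 := by rw [← exp_nat_mul]; ring_nf
  rw [coth, div_eq_div_iff (sinh_ne_zero.mpr hv) (exp_four_mul_sub_one_ne_zero hv), cosh_eq,
    sinh_eq, h2, h4, exp_neg]
  field_simp
  ring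

end Coth

open Complex Filter Topology

lemma hasDerivAt_cexp_mul_ofReal (a : ℂ) (t : ℝ) :
    HasDerivAt (fun τ : ℝ => exp (a * τ)) (a * exp (a * t)) t :=
  (((hasDerivAt_id t).ofReal_comp.const_mul a).cexp).congr_deriv
    (by simp only [id, ofReal_one, mul_one, mul_comm])

section Ansatz

variable (q₀ θ : ℝ) (f : ℝ → ℝ)

noncomputable def phase (x t : ℝ) : ℝ := q₀ * Real.cos θ * (x + 2 * q₀ * t * Real.sin θ)

noncomputable def ansatz (x t : ℝ) : ℂ :=
  q₀ * exp (2 * I * q₀ ^ 2 * t) * (Real.cos θ * f (phase q₀ θ x t) + I * Real.sin θ)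

variable {q₀ θ f}

lemma phase_neg (x t : ℝ) : phase q₀ θ (-x) (-t) = -phase q₀ θ x t := by
  simp only [phase]; ring

lemma hasDerivAt_phase_space (x t : ℝ) :
    HasDerivAt (fun y => phase q₀ θ y t) (q₀ * Real.cos θ) x :=
  (((hasDerivAt_id x).add_const _).const_mul _).congr_deriv (mul_one _)

lemma hasDerivAt_phase_time (x t : ℝ) :
    HasDerivAt (fun τ => phase q₀ θ x τ) (2 * q₀ ^ 2 * Real.cos θ * Real.sin θ) t :=
  (((((hasDerivAt_id t).const_mul (2 * q₀)).mul_const (Real.sin θ)).const_add x).const_mul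
    (q₀ * Real.cos θ)).congr_deriv (by ring)

lemma hasDerivAt_ansatz_time {x t f' : ℝ} (hf : HasDerivAt f f' (phase q₀ θ x t)) :
    HasDerivAt (fun τ => ansatz q₀ θ f x τ)
      (q₀ * exp (2 * I * q₀ ^ 2 * t) * (2 * I * q₀ ^ 2 *
        (Real.cos θ * f (phase q₀ θ x t) + I * Real.sin θ) +
          2 * q₀ ^ 2 * Real.cos θ ^ 2 * Real.sin θ * f')) t := by
  have hprofile := ((hf.comp t (hasDerivAt_phase_time x t)).ofReal_comp.const_mul
    (Real.cos θ : ℂ)).add_const (I * Real.sin θ)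
  exact (((hasDerivAt_cexp_mul_ofReal _ t).const_mul (q₀ : ℂ)).mul hprofile).congr_deriv
    (by simp only [Function.comp, ofReal_mul, ofReal_pow, ofReal_ofNat]; ring)

lemma hasDerivAt_ansatz_space {x t f' : ℝ} (hf : HasDerivAt f f' (phase q₀ θ x t)) :
    HasDerivAt (fun y => ansatz q₀ θ f y t)
      (q₀ * exp (2 * I * q₀ ^ 2 * t) * (q₀ * Real.cos θ ^ 2 * f')) x := by
  have hprofile := ((hf.comp x (hasDerivAt_phase_space x t)).ofReal_comp.const_mul
    (Real.cos θ : ℂ)).add_const (I * Real.sin θ)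
  exact (hprofile.const_mul _).congr_deriv (by push_cast; ring)

lemma hasDerivAt_deriv_ansatz_space {x t : ℝ}
    (hf : ∀ᶠ v in 𝓝 (phase q₀ θ x t), HasDerivAt f (1 - f v ^ 2) v) :
    HasDerivAt (deriv fun y => ansatz q₀ θ f y t)
      (q₀ * exp (2 * I * q₀ ^ 2 * t) * (-2 * q₀ ^ 2 * Real.cos θ ^ 3 *
        f (phase q₀ θ x t) * (1 - f (phase q₀ θ x t) ^ 2))) x := by
  have hderiv : (deriv fun y => ansatz q₀ θ f y t) =ᶠ[𝓝 x] fun y =>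
      q₀ * exp (2 * I * q₀ ^ 2 * t) * (q₀ * Real.cos θ ^ 2) *
        (1 - f (phase q₀ θ y t) ^ 2 : ℝ) := by
    filter_upwards [(hasDerivAt_phase_space x t).continuousAt.tendsto.eventually hf] with y hy
    rw [(hasDerivAt_ansatz_space hy).deriv]; ring
  have hprofile := hf.self_of_nhds.comp x (hasDerivAt_phase_space x t)
  have hriccati := ((hprofile.fun_pow 2).const_sub 1).ofReal_comp.const_mul
    ((q₀ : ℂ) * exp (2 * I * q₀ ^ 2 * t) * (q₀ * Real.cos θ ^ 2))
  refine (hriccati.congr_deriv ?_).congr_of_eventuallyEq hderiv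
  simp only [Function.comp]
  push_cast
  ring

lemma ansatz_neg {x t : ℝ} (hodd : f (-phase q₀ θ x t) = -f (phase q₀ θ x t)) :
    ansatz q₀ θ f (-x) (-t) = q₀ * exp (-(2 * I * q₀ ^ 2 * t)) *
      (-(Real.cos θ * f (phase q₀ θ x t)) + I * Real.sin θ) := by
  simp only [ansatz, phase_neg, hodd]
  push_cast
  ring_nf

theorem ansatz_solves_nonlocal_nls {x t : ℝ}
    (hf : ∀ᶠ v in 𝓝 (phase q₀ θ x t), HasDerivAt f (1 - f v ^ 2) v)
    (hodd : f (-phase q₀ θ x t) = -f (phase q₀ θ x t)) :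
    I * deriv (fun τ => ansatz q₀ θ f x τ) t =
      deriv (fun y => deriv (fun y' => ansatz q₀ θ f y' t) y) x +
        2 * ansatz q₀ θ f x t ^ 2 * ansatz q₀ θ f (-x) (-t) := by
  rw [(hasDerivAt_ansatz_time hf.self_of_nhds).deriv, (hasDerivAt_deriv_ansatz_space hf).deriv,
    ansatz_neg hodd, ansatz]
  have hE : exp (2 * I * q₀ ^ 2 * t) * exp (-(2 * I * q₀ ^ 2 * t)) = 1 := by
    rw [← exp_add, add_neg_cancel, exp_zero]
  have hθ : (Real.sin θ : ℂ) ^ 2 + (Real.cos θ : ℂ) ^ 2 = 1 := by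
    exact_mod_cast Real.sin_sq_add_cos_sq θ
  set c := Real.cos θ
  set s := Real.sin θ
  set F := f (phase q₀ θ x t)
  set E := exp (2 * I * q₀ ^ 2 * t)
  push_cast
  linear_combination 2 * q₀ ^ 3 * E * (c * F + I * s) * ((1 - s ^ 2) * I_sq + hθ)
    - 2 * q₀ ^ 3 * E * (c * F + I * s) ^ 2 * (-(c * F) + I * s) * hE

lemma ansatz_coth_eq_exp {x t : ℝ} (h : phase q₀ θ x t ≠ 0) :
    ansatz q₀ θ coth x t = q₀ * exp (2 * I * q₀ ^ 2 * t) *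
      ((((1 + Real.exp (4 * phase q₀ θ x t) + 2 * Real.exp (2 * phase q₀ θ x t)) *
          Real.cos θ : ℝ) : ℂ) + I * ((Real.sin θ * (Real.exp (4 * phase q₀ θ x t) - 1) : ℝ) : ℂ)) /
      ((Real.exp (4 * phase q₀ θ x t) - 1 : ℝ) : ℂ) := by
  have hD : ((Real.exp (4 * phase q₀ θ x t) - 1 : ℝ) : ℂ) ≠ 0 :=
    ofReal_ne_zero.mpr (exp_four_mul_sub_one_ne_zero h)
  rw [ansatz, coth_eq_exp h, eq_div_iff hD, ofReal_div]
  field_simp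
  push_cast
  ring

end Ansatz

end NonlocalNLS

open NonlocalNLS Filter Topology

theorem rst_nls_singular_bright_one_soliton_general (q₀ θp : ℝ)
    (ξ : ℝ → ℝ → ℝ)
    (hξ : ∀ x t : ℝ, ξ x t = q₀ * Real.cos θp * (x + 2 * q₀ * t * Real.sin θp))
    (q : ℝ → ℝ → ℂ)
    (hq : ∀ x t : ℝ, q x t =
      (q₀ : ℂ) * Complex.exp (2 * Complex.I * (q₀ : ℂ) ^ 2 * (t : ℂ)) *
        ((((1 + Real.exp (4 * ξ x t) + 2 * Real.exp (2 * ξ x t)) * Real.cos θp : ℝ) : ℂ) +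
          Complex.I * ((Real.sin θp * (Real.exp (4 * ξ x t) - 1) : ℝ) : ℂ)) /
        ((Real.exp (4 * ξ x t) - 1 : ℝ) : ℂ)) :
    (∀ x t : ℝ, ξ x t ≠ 0 → ξ (-x) (-t) ≠ 0) ∧
    (∀ x t : ℝ, ξ x t ≠ 0 →
      Complex.I * deriv (fun τ : ℝ => q x τ) t =
        deriv (fun y : ℝ => deriv (fun y' : ℝ => q y' t) y) x
          + 2 * (q x t) ^ 2 * q (-x) (-t)) := by
  obtain rfl : ξ = phase q₀ θp := funext₂ hξ
  have hq_eq : ∀ x t, phase q₀ θp x t ≠ 0 → q x t = ansatz q₀ θp coth x t := fun x t h => by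
    rw [hq, ansatz_coth_eq_exp h]
  have hneg : ∀ x t, phase q₀ θp x t ≠ 0 → phase q₀ θp (-x) (-t) ≠ 0 := fun x t h => by
    rwa [phase_neg, neg_ne_zero]
  refine ⟨hneg, fun x t h => ?_⟩
  have htime : (fun τ => q x τ) =ᶠ[𝓝 t] fun τ => ansatz q₀ θp coth x τ :=
    ((hasDerivAt_phase_time x t).continuousAt.eventually_ne h).mono fun τ => hq_eq x τ
  have hspace : (fun y => q y t) =ᶠ[𝓝 x] fun y => ansatz q₀ θp coth y t :=
    ((hasDerivAt_phase_space x t).continuousAt.eventually_ne h).mono fun y => hq_eq y t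
  rw [htime.deriv_eq, hspace.deriv.deriv_eq, hq_eq x t h, hq_eq (-x) (-t) (hneg x t h)]
  exact ansatz_solves_nonlocal_nls ((eventually_ne_nhds h).mono fun v => hasDerivAt_coth)
    (coth_neg _)

/-- The singular bright one-soliton of the nonlocal reverse space-time NLS equation
with σ = -1 (case θ₊ + θ₋ = π, δ = 1): on the open set `Ω = {ξ ≠ 0}`, where
`ξ = q₀ cos θ₊ (x + 2 q₀ t sin θ₊)`, the set `Ω` is invariant under
`(x,t) ↦ (-x,-t)` and `q` satisfies `i q_t = q_xx + 2 q² q(-x,-t)` on `Ω`. -/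
theorem rst_nls_singular_bright_one_soliton (q₀ θp : ℝ) (hq₀ : 0 < q₀)
    (hθ : θp ∈ Set.Ioo 0 Real.pi) (hθ' : θp ≠ Real.pi / 2)
    (ξ : ℝ → ℝ → ℝ)
    (hξ : ∀ x t : ℝ, ξ x t = q₀ * Real.cos θp * (x + 2 * q₀ * t * Real.sin θp))
    (q : ℝ → ℝ → ℂ)
    (hq : ∀ x t : ℝ, q x t =
      (q₀ : ℂ) * Complex.exp (2 * Complex.I * (q₀ : ℂ) ^ 2 * (t : ℂ)) *
        ((((1 + Real.exp (4 * ξ x t) + 2 * Real.exp (2 * ξ x t)) * Real.cos θp : ℝ) : ℂ) +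
          Complex.I * ((Real.sin θp * (Real.exp (4 * ξ x t) - 1) : ℝ) : ℂ)) /
        ((Real.exp (4 * ξ x t) - 1 : ℝ) : ℂ)) :
    (∀ x t : ℝ, ξ x t ≠ 0 → ξ (-x) (-t) ≠ 0) ∧
    (∀ x t : ℝ, ξ x t ≠ 0 →
      Complex.I * deriv (fun τ : ℝ => q x τ) t =
        deriv (fun y : ℝ => deriv (fun y' : ℝ => q y' t) y) x
          + 2 * (q x t) ^ 2 * q (-x) (-t)) :=
  rst_nls_singular_bright_one_soliton_general q₀ θp ξ hξ q hq
end
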